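/- Let A and B be skew shapes and fix l ≥ 1. Then cols_l(A) ⊴ cols_l(B) in the dominance order if and only if rects_{k,l}(A) ≤ rects_{k,l}(B) for all k ≥ 1. -/

import Mathlib

open Finset

/-- The weakly decreasing rearrangement of a finite sequence (list) of natural numbers,
i.e. the partition obtained by sorting its parts into weakly decreasing order. -/
def sortDesc (l : List ℕ) : List ℕ := l.mergeSort (fun a b => b ≤ a)

/-- The (extended) dominance order on partitions, represented as weakly decreasing lists
of natural numbers (parts beyond the length of the list are taken to be `0`):
`Dom a b` means `a ⊴ b`, i.e. `a₁ + ⋯ + a_k ≤ b₁ + ⋯ + b_k` for all `k`. -/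
def Dom (a b : List ℕ) : Prop := ∀ k : ℕ, (a.take k).sum ≤ (b.take k).sum

/-- The conjugate (transpose) of a partition given as a list of natural numbers:
the `j`-th entry (0-indexed) is the number of parts that are `> j`. -/
def conj (l : List ℕ) : List ℕ :=
  (List.range (l.foldr max 0)).map (fun j => (l.filter (fun x => j < x)).length)

/-- A skew shape `λ/μ`: a pair of Young diagrams `μ ⊆ λ`. -/
structure SkewShape where
  outer : YoungDiagram
  inner : YoungDiagram
  le : inner ≤ outer

namespace SkewShape

/-- The cells (boxes) of a skew shape: boxes of the outer diagram not in the inner one. -/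
def cells (A : SkewShape) : Finset (ℕ × ℕ) := A.outer.cells \ A.inner.cells

/-- The number of rows of (the outer shape of) a skew shape. -/
def numRows (A : SkewShape) : ℕ := A.outer.colLen 0

/-- The number of columns of (the outer shape of) a skew shape. -/
def numCols (A : SkewShape) : ℕ := A.outer.rowLen 0

/-- `A.overlap k i` is the number of columns occupied in common by the `k` consecutive
rows `i, i+1, …, i+k-1` of the skew shape `A` (rows indexed from 0). -/
def overlap (A : SkewShape) (k i : ℕ) : ℕ :=
  ((Finset.range A.numCols).filter (fun j => ∀ t, t < k → (i + t, j) ∈ A.cells)).card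

/-- `rows_k(A)`: the weakly decreasing rearrangement of the row-overlap numbers
`(overlap k 0, overlap k 1, …)`; zero parts are discarded (a partition is identified
with its zero-padded versions).  `A.rowsK 1` is the partition of row lengths of `A`. -/
def rowsK (A : SkewShape) (k : ℕ) : List ℕ :=
  sortDesc (((List.range (A.numRows + 1 - k)).map (A.overlap k)).filter (fun x => 0 < x))

/-- The transpose (conjugate) of a skew shape. -/
def transpose (A : SkewShape) : SkewShape :=
  ⟨A.outer.transpose, A.inner.transpose, YoungDiagram.transpose_mono A.le⟩

/-- `cols_l(A)`: the weakly decreasing rearrangement of the column-overlap numbers of `A`;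
`A.colsK 1` is the partition of column lengths of `A`. -/
def colsK (A : SkewShape) (l : ℕ) : List ℕ := A.transpose.rowsK l

/-- `rects k l A` is the number of `k × l` rectangular subdiagrams (contiguous `k × l`
blocks of boxes) contained inside the skew shape `A`, recorded by the position of
their top-left corner. -/
def rects (A : SkewShape) (k l : ℕ) : ℕ :=
  (((Finset.range A.numRows) ×ˢ (Finset.range A.numCols)).filter
    (fun p => ∀ t, t < k → ∀ u, u < l → (p.1 + t, p.2 + u) ∈ A.cells)).card

end SkewShape

/-- A semistandard Young tableau of skew shape `A`: a filling of the boxes of `A`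
with positive integers, weakly increasing along rows and strictly increasing down
columns (entries outside `A` are recorded as `0`). -/
structure SkewSsyt (A : SkewShape) where
  entry : ℕ → ℕ → ℕ
  pos : ∀ i j, (i, j) ∈ A.cells → 1 ≤ entry i j
  zeros : ∀ i j, (i, j) ∉ A.cells → entry i j = 0
  row_weak : ∀ i j1 j2, j1 ≤ j2 → (i, j1) ∈ A.cells → (i, j2) ∈ A.cells →
      entry i j1 ≤ entry i j2
  col_strict : ∀ i1 i2 j, i1 < i2 → (i1, j) ∈ A.cells → (i2, j) ∈ A.cells →
      entry i1 j < entry i2 j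

/-- The number of boxes of `T` filled with the entry `v`. -/
def contentCount {A : SkewShape} (T : SkewSsyt A) (v : ℕ) : ℕ :=
  (A.cells.filter (fun c => T.entry c.1 c.2 = v)).card

/-- `T` has content `ν` (a partition written as a list, 0-indexed: `ν.getD v 0` is the
`(v+1)`-st part): the number of entries equal to `v + 1` is the `(v+1)`-st part of `ν`. -/
def HasContent {A : SkewShape} (T : SkewSsyt A) (ν : List ℕ) : Prop :=
  ∀ v : ℕ, contentCount T (v + 1) = ν.getD v 0

/-- `readBefore c c'` : the box `c` comes strictly before the box `c'` in the reverse
reading order (rows top to bottom, each row read right to left). -/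
def readBefore (c c' : ℕ × ℕ) : Prop := c.1 < c'.1 ∨ (c.1 = c'.1 ∧ c'.2 < c.2)

instance (c c' : ℕ × ℕ) : Decidable (readBefore c c') := by
  unfold readBefore; infer_instance

/-- `T` is a Littlewood–Richardson filling: its reverse reading word is a lattice word,
i.e. at every box `c` carrying an entry `v + 2`, the number of occurrences of `v + 2`
read so far (weakly up to `c`) is at most the number of occurrences of `v + 1` read
strictly before `c`. -/
def IsLR {A : SkewShape} (T : SkewSsyt A) : Prop :=
  ∀ c ∈ A.cells, ∀ v : ℕ, T.entry c.1 c.2 = v + 2 →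
    (A.cells.filter (fun c' => T.entry c'.1 c'.2 = v + 2 ∧ (readBefore c' c ∨ c' = c))).card ≤
    (A.cells.filter (fun c' => T.entry c'.1 c'.2 = v + 1 ∧ readBefore c' c)).card

/-- The support of the skew Schur function `s_A`: by the Littlewood–Richardson rule,
the set of partitions `ν` (weakly decreasing lists) admitting an LR filling of `A`
of content `ν`, i.e. those `ν` with `s_ν` appearing with nonzero coefficient in `s_A`. -/
def SkewShape.support (A : SkewShape) : Set (List ℕ) :=
  { ν | ν.Pairwise (· ≥ ·) ∧ ∃ T : SkewSsyt A, IsLR T ∧ HasContent T ν }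

/-- The coefficient of the Schur function `s_ν` in the Schur expansion of `s_A`:
by the Littlewood–Richardson rule, the number of LR fillings of `A` of content `ν`. -/
noncomputable def lrCoeff (A : SkewShape) (ν : List ℕ) : ℕ :=
  Nat.card { T : SkewSsyt A // IsLR T ∧ HasContent T ν }

/-- `s_A − s_B` is Schur-positive: every coefficient in the Schur expansion of the
difference is nonnegative, i.e. (by the LR rule) each LR coefficient of `B` is at most
the corresponding one of `A`. -/
def SchurPositiveDiff (A B : SkewShape) : Prop :=
  ∀ ν : List ℕ, ν.Pairwise (· ≥ ·) → lrCoeff B ν ≤ lrCoeff A ν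

/-- The skew Schur function `s_A = Σ_T x^T`, as a formal power series in the variables
`x_0, x_1, x_2, …` (variable `x_v` recording entries equal to `v + 1`): the coefficient
of the monomial with exponents `d` is the number of SSYT of shape `A` and content `d`. -/
noncomputable def skewSchur (A : SkewShape) : MvPowerSeries ℕ ℤ :=
  fun d => (Nat.card { T : SkewSsyt A // ∀ v : ℕ, contentCount T (v + 1) = d v } : ℤ)

/-- The boxes remaining after deleting the top box of every non-empty column of `A`:
a box survives iff there is a box of `A` directly above it. -/
def trimCells (A : SkewShape) : Finset (ℕ × ℕ) :=
  A.cells.filter (fun c => 1 ≤ c.1 ∧ (c.1 - 1, c.2) ∈ A.cells)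

/-- The set of boxes of the skew shape `A ∗ B`, obtained by positioning `B` immediately
below and to the left of `A` so that `A` and `B` share no common row or column. -/
def starCells (A B : SkewShape) : Finset (ℕ × ℕ) :=
  A.cells.image (fun c => (c.1, c.2 + B.numCols)) ∪
    B.cells.image (fun c => (c.1 + A.numRows, c.2))

/-- The straight shape (partition) `μ`, viewed as the skew shape `μ/(0)`. -/
def ofYD (μ : YoungDiagram) : SkewShape := ⟨μ, ⊥, bot_le⟩

/-- The list of parts `(μ_k, μ_{k+1}, …, μ_l)` (1-indexed) of a partition `μ` given as a
Young diagram, parts beyond the length of `μ` being `0`. -/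
def tailParts (μ : YoungDiagram) (k l : ℕ) : List ℕ :=
  (List.range (l + 1 - k)).map (fun t => μ.rowLen (k - 1 + t))

/-! Let `c_j` be the number of rows shared by the columns `j, …, j + l - 1` of a skew shape. These
rows form an interval, because the column lengths of the inner and outer diagrams are antitone, so
the `k × l` rectangles with leftmost column `j` are the runs of `k` consecutive rows in it, and
`rects_{k,l}(A) = ∑ⱼ (c_j - (k - 1))⁺` depends only on `cols_l(A)`.

For weakly decreasing `a` and `b`, `a ⊴ b` iff `∑ᵢ (aᵢ - m)⁺ ≤ ∑ᵢ (bᵢ - m)⁺` for every `m`: the bound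
`a₁ + ⋯ + a_K ≤ ∑ᵢ (aᵢ - m)⁺ + K m` holds for all `K` and `m`, with equality when `K = #{i | aᵢ > m}`
or when `m = a_K`. -/

lemma sortDesc_perm (l : List ℕ) : (sortDesc l).Perm l := List.mergeSort_perm l _

lemma sortDesc_pairwise_ge (l : List ℕ) : (sortDesc l).Pairwise (· ≥ ·) :=
  (List.pairwise_mergeSort (le := fun a b : ℕ => decide (b ≤ a))
    (fun _ _ _ h₁ h₂ => by simp only [decide_eq_true_eq] at *; omega)
    (fun a b => by simp only [decide_eq_true_eq, Bool.or_eq_true]; omega) l).imp (by simp)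

lemma List.sum_map_filter_of_eq_zero {α M : Type*} [AddMonoid M] (p : α → Bool) (f : α → M)
    (hf : ∀ x, p x = false → f x = 0) (l : List α) :
    ((l.filter p).map f).sum = (l.map f).sum := by
  induction l with
  | nil => rfl
  | cons x l ih => cases hp : p x <;> simp [hp, hf, ih]

lemma List.sum_map_range {M : Type*} [AddCommMonoid M] (n : ℕ) (g : ℕ → M) :
    ((List.range n).map g).sum = ∑ j ∈ Finset.range n, g j := by
  rw [sum_eq_multiset_sum]
  rfl

lemma sum_map_tsub_eq_zero {a : List ℕ} {m : ℕ} (h : ∀ x ∈ a, x ≤ m) :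
    (a.map (· - m)).sum = 0 :=
  List.sum_eq_zero fun _ hy => by
    obtain ⟨x, hx, rfl⟩ := List.mem_map.mp hy
    exact Nat.sub_eq_zero_of_le (h x hx)

lemma sum_take_le_sum_map_tsub_add (a : List ℕ) (K m : ℕ) :
    (a.take K).sum ≤ (a.map (· - m)).sum + K * m := by
  induction a generalizing K with
  | nil => simp
  | cons x a ih =>
    cases K with
    | zero => simp
    | succ K =>
      simp only [List.take_succ_cons, List.sum_cons, List.map_cons, Nat.succ_mul]
      have := ih K
      omega

lemma exists_sum_take_eq_sum_map_tsub_add {a : List ℕ} (ha : a.Pairwise (· ≥ ·)) (m : ℕ) :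
    ∃ K, (a.take K).sum = (a.map (· - m)).sum + K * m := by
  induction a with
  | nil => exact ⟨0, by simp⟩
  | cons x a ih =>
    rw [List.pairwise_cons] at ha
    by_cases hx : m < x
    · obtain ⟨K, hK⟩ := ih ha.2
      refine ⟨K + 1, ?_⟩
      simp only [List.take_succ_cons, List.sum_cons, List.map_cons, Nat.succ_mul]
      omega
    · refine ⟨0, ?_⟩
      rw [sum_map_tsub_eq_zero]
      · simp
      · simp only [List.mem_cons, forall_eq_or_imp]
        exact ⟨by omega, fun y hy => (ha.1 y hy).trans (by omega)⟩

lemma sum_map_tsub_getD_add_le_sum_take {b : List ℕ} (hb : b.Pairwise (· ≥ ·)) (K : ℕ) :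
    (b.map (· - b.getD K 0)).sum + (K + 1) * b.getD K 0 ≤ (b.take (K + 1)).sum := by
  induction b generalizing K with
  | nil => simp
  | cons x b ih =>
    rw [List.pairwise_cons] at hb
    cases K with
    | zero =>
      simp only [List.getD_cons_zero, List.map_cons, List.sum_cons, List.take_succ_cons,
        List.take_zero, List.sum_nil, sum_map_tsub_eq_zero hb.1]
      omega
    | succ K =>
      simp only [List.getD_cons_succ, List.map_cons, List.sum_cons, List.take_succ_cons]
      have hK := ih hb.2 K
      have hx : b.getD K 0 ≤ x := by
        rcases lt_or_ge K b.length with h | h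
        · rw [List.getD_eq_getElem _ _ h]
          exact hb.1 _ (List.getElem_mem h)
        · rw [List.getD_eq_default _ _ h]
          exact Nat.zero_le x
      rw [Nat.succ_mul (K + 1)]
      omega

theorem dom_iff_forall_sum_map_tsub_le {a b : List ℕ} (ha : a.Pairwise (· ≥ ·))
    (hb : b.Pairwise (· ≥ ·)) :
    Dom a b ↔ ∀ m, (a.map (· - m)).sum ≤ (b.map (· - m)).sum := by
  constructor
  · intro hab m
    obtain ⟨K, hK⟩ := exists_sum_take_eq_sum_map_tsub_add ha m
    have := hab K
    have := sum_take_le_sum_map_tsub_add b K m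
    omega
  · rintro h (_ | K)
    · simp
    · have := sum_take_le_sum_map_tsub_add a (K + 1) (b.getD K 0)
      have := sum_map_tsub_getD_add_le_sum_take hb K
      have := h (b.getD K 0)
      omega

lemma YoungDiagram.colLen_eq_zero_of_rowLen_le (μ : YoungDiagram) {j : ℕ} (h : μ.rowLen 0 ≤ j) :
    μ.colLen j = 0 :=
  Nat.eq_zero_of_not_pos fun hj =>
    (mem_iff_lt_rowLen.mp (mem_iff_lt_colLen.mpr hj)).not_ge h

namespace SkewShape

variable (A : SkewShape)

lemma mem_cells_iff {i j : ℕ} :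
    (i, j) ∈ A.cells ↔ A.inner.colLen j ≤ i ∧ i < A.outer.colLen j := by
  simp only [cells, mem_sdiff, YoungDiagram.mem_cells, YoungDiagram.mem_iff_lt_colLen, not_lt]
  exact and_comm

lemma mem_transpose_cells_iff {i j : ℕ} : (j, i) ∈ A.transpose.cells ↔ (i, j) ∈ A.cells := by
  simp [cells, transpose]

lemma numCols_transpose : A.transpose.numCols = A.numRows := by
  simp [numCols, numRows, transpose]

lemma numRows_transpose : A.transpose.numRows = A.numCols := by
  simp [numCols, numRows, transpose]

lemma forall_lt_mem_cells_iff {l : ℕ} (hl : 1 ≤ l) {i j : ℕ} :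
    (∀ u < l, (i, j + u) ∈ A.cells) ↔
      A.inner.colLen j ≤ i ∧ i < A.outer.colLen (j + l - 1) := by
  simp only [mem_cells_iff]
  constructor
  · intro h
    have hlast := h (l - 1) (by omega)
    rw [← Nat.add_sub_assoc hl] at hlast
    exact ⟨(h 0 hl).1, hlast.2⟩
  · rintro ⟨hin, hout⟩ u hu
    exact ⟨(A.inner.colLen_anti j (j + u) (by omega)).trans hin,
      hout.trans_le (A.outer.colLen_anti _ _ (by omega))⟩

lemma colLen_le_numRows (j : ℕ) : A.outer.colLen j ≤ A.numRows :=
  A.outer.colLen_anti 0 j (Nat.zero_le j)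

lemma transpose_overlap {l : ℕ} (hl : 1 ≤ l) (j : ℕ) :
    A.transpose.overlap l j = A.outer.colLen (j + l - 1) - A.inner.colLen j := by
  have hrows : (range A.transpose.numCols).filter
      (fun i => ∀ t < l, (j + t, i) ∈ A.transpose.cells) =
        Ico (A.inner.colLen j) (A.outer.colLen (j + l - 1)) := by
    ext i
    simp only [mem_filter, mem_range, mem_Ico, mem_transpose_cells_iff,
      A.forall_lt_mem_cells_iff hl, numCols_transpose]
    have := A.colLen_le_numRows (j + l - 1)
    omega
  rw [overlap, hrows, Nat.card_Ico]

lemma card_rects_at_col {k l : ℕ} (hk : 1 ≤ k) (hl : 1 ≤ l) (j : ℕ) :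
    ((range A.numRows).filter (fun r => ∀ t < k, ∀ u < l, (r + t, j + u) ∈ A.cells)).card =
      A.transpose.overlap l j + 1 - k := by
  have hrows : (range A.numRows).filter (fun r => ∀ t < k, ∀ u < l, (r + t, j + u) ∈ A.cells) =
      Ico (A.inner.colLen j) (A.outer.colLen (j + l - 1) + 1 - k) := by
    ext r
    simp only [mem_filter, mem_range, mem_Ico, A.forall_lt_mem_cells_iff hl]
    have := A.colLen_le_numRows (j + l - 1)
    constructor
    · rintro ⟨-, h⟩
      exact ⟨by simpa using (h 0 hk).1, by have := (h (k - 1) (by omega)).2; omega⟩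
    · rintro ⟨hin, hout⟩
      exact ⟨by omega, fun t ht => ⟨by omega, by omega⟩⟩
  rw [hrows, Nat.card_Ico, A.transpose_overlap hl]
  omega

lemma rects_eq_sum_transpose_overlap {k l : ℕ} (hk : 1 ≤ k) (hl : 1 ≤ l) :
    A.rects k l = ∑ j ∈ range A.numCols, (A.transpose.overlap l j + 1 - k) := by
  rw [rects, card_filter, sum_product_right]
  refine sum_congr rfl fun j _ => ?_
  rw [← card_filter, A.card_rects_at_col hk hl]

lemma sum_map_colsK_tsub {l : ℕ} (hl : 1 ≤ l) (m : ℕ) :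
    ((A.colsK l).map (· - m)).sum = ∑ j ∈ range A.numCols, (A.transpose.overlap l j - m) := by
  rw [colsK, rowsK, ((sortDesc_perm _).map _).sum_eq,
    List.sum_map_filter_of_eq_zero _ _ (fun x hx => by simp_all), List.map_map,
    List.sum_map_range, numRows_transpose]
  refine sum_subset (range_subset_range.mpr (by omega)) fun j _ hj => ?_
  simp only [mem_range, numCols] at hj
  have hempty : A.outer.colLen (j + l - 1) = 0 :=
    A.outer.colLen_eq_zero_of_rowLen_le (by omega)
  simp [A.transpose_overlap hl, hempty]

lemma rects_eq_sum_map_colsK_tsub {k l : ℕ} (hk : 1 ≤ k) (hl : 1 ≤ l) :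
    A.rects k l = ((A.colsK l).map (· - (k - 1))).sum := by
  rw [A.rects_eq_sum_transpose_overlap hk hl, A.sum_map_colsK_tsub hl]
  exact sum_congr rfl fun j _ => by omega

lemma colsK_pairwise_ge (l : ℕ) : (A.colsK l).Pairwise (· ≥ ·) := sortDesc_pairwise_ge _

end SkewShape

/-- second part of Proposition `pro:3measures`.
Let `A` and `B` be skew shapes and fix `l ≥ 1`.  Then `cols_l(A) ⊴ cols_l(B)` in the
dominance order if and only if `rects_{k,l}(A) ≤ rects_{k,l}(B)` for all `k ≥ 1`. -/
theorem colsL_dom_iff_rects_le (A B : SkewShape) (l : ℕ) (hl : 1 ≤ l) :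
    Dom (A.colsK l) (B.colsK l) ↔ ∀ k, 1 ≤ k → A.rects k l ≤ B.rects k l := by
  rw [dom_iff_forall_sum_map_tsub_le (A.colsK_pairwise_ge l) (B.colsK_pairwise_ge l)]
  constructor
  · intro h k hk
    rw [A.rects_eq_sum_map_colsK_tsub hk hl, B.rects_eq_sum_map_colsK_tsub hk hl]
    exact h (k - 1)
  · intro h m
    simpa [A.rects_eq_sum_map_colsK_tsub (Nat.le_add_left 1 m) hl,
      B.rects_eq_sum_map_colsK_tsub (Nat.le_add_left 1 m) hl] using h (m + 1) (by omega)
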